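/- Let X be a measurable space, let P and Q be probability measures on X, and let k : X × X → ℝ be a measurable function with 0 ≤ k(x,y) ≤ 1 for all x, y ∈ X. Define the kernel-based divergence D(P‖Q) = ∫∫ k(r,r') dP(r) dP(r') − ∫∫ k(r,q) dQ(q) dP(r). Then |D(P‖Q)| ≤ TVD(P,Q). -/

import Mathlib

open MeasureTheory

/-- Total variation distance between two measures: the supremum over
measurable sets `A` of `|P A - Q A|`. -/
noncomputable def tvDist {X : Type*} [MeasurableSpace X]
    (P Q : Measure X) : ℝ :=
  ⨆ A : {A : Set X // MeasurableSet A}, |(P A.1).toReal - (Q A.1).toReal|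

lemma tvDist_bddAbove {X : Type*} [MeasurableSpace X]
    (P Q : Measure X) [IsProbabilityMeasure P] [IsProbabilityMeasure Q] :
    BddAbove (Set.range fun A : {A : Set X // MeasurableSet A} =>
      |(P A.1).toReal - (Q A.1).toReal|) := by
  refine ⟨1, ?_⟩
  rintro x ⟨A, rfl⟩
  have h1 : (P A.1).toReal ≤ 1 := by
    have := measure_mono (μ := P) (Set.subset_univ A.1)
    simpa using ENNReal.toReal_mono (by simp) this
  have h2 : (Q A.1).toReal ≤ 1 := by
    have := measure_mono (μ := Q) (Set.subset_univ A.1)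
    simpa using ENNReal.toReal_mono (by simp) this
  have h3 : 0 ≤ (P A.1).toReal := ENNReal.toReal_nonneg
  have h4 : 0 ≤ (Q A.1).toReal := ENNReal.toReal_nonneg
  rw [abs_sub_le_iff]
  constructor <;> linarith

lemma abs_measure_sub_le_tvDist {X : Type*} [MeasurableSpace X]
    (P Q : Measure X) [IsProbabilityMeasure P] [IsProbabilityMeasure Q]
    {A : Set X} (hA : MeasurableSet A) :
    |(P A).toReal - (Q A).toReal| ≤ tvDist P Q :=
  le_ciSup (tvDist_bddAbove P Q) (⟨A, hA⟩ : {A : Set X // MeasurableSet A})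

lemma abs_integral_sub_le_tvDist {X : Type*} [MeasurableSpace X]
    (P Q : Measure X) [IsProbabilityMeasure P] [IsProbabilityMeasure Q]
    (f : X → ℝ) (hf : Measurable f) (h0 : ∀ x, 0 ≤ f x) (h1 : ∀ x, f x ≤ 1) :
    |(∫ x, f x ∂P) - ∫ x, f x ∂Q| ≤ tvDist P Q := by
  have hint : ∀ (μ : Measure X) [IsProbabilityMeasure μ], Integrable f μ := by
    intro μ _
    refine (integrable_const (1 : ℝ)).mono' hf.aestronglyMeasurable ?_
    filter_upwards with x
    rw [Real.norm_eq_abs, abs_of_nonneg (h0 x)]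
    exact h1 x
  have hP := (hint P).integral_eq_integral_Ioc_meas_le
    (Filter.Eventually.of_forall h0) (Filter.Eventually.of_forall h1)
  have hQ := (hint Q).integral_eq_integral_Ioc_meas_le
    (Filter.Eventually.of_forall h0) (Filter.Eventually.of_forall h1)
  set FP : ℝ → ℝ := fun t => (P {a | t ≤ f a}).toReal with hFP
  set FQ : ℝ → ℝ := fun t => (Q {a | t ≤ f a}).toReal with hFQ
  have hmeas : ∀ (μ : Measure X), Measurable fun t => (μ {a | t ≤ f a}).toReal := by
    intro μ
    refine Measurable.ennreal_toReal ?_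
    exact Antitone.measurable fun s t hst =>
      measure_mono (fun a ha => le_trans hst ha)
  have hIntF : ∀ (μ : Measure X) [IsProbabilityMeasure μ],
      IntegrableOn (fun t => (μ {a | t ≤ f a}).toReal) (Set.Ioc (0:ℝ) 1) := by
    intro μ _
    refine (integrableOn_const (C := (1:ℝ)) (s := Set.Ioc (0:ℝ) 1) (μ := volume) (by simp)).mono' ((hmeas μ).aestronglyMeasurable) ?_
    filter_upwards with t
    rw [Real.norm_eq_abs, abs_of_nonneg ENNReal.toReal_nonneg]
    have := measure_mono (μ := μ) (Set.subset_univ {a | t ≤ f a})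
    simpa using ENNReal.toReal_mono (by simp) this
  rw [hP, hQ]
  simp only [measureReal_def]
  rw [← integral_sub (hIntF P) (hIntF Q)]
  calc |∫ t in Set.Ioc (0:ℝ) 1, (FP t - FQ t)|
      ≤ ∫ t in Set.Ioc (0:ℝ) 1, |FP t - FQ t| := by
        simpa [Real.norm_eq_abs] using
          norm_integral_le_integral_norm (fun t => FP t - FQ t)
            (μ := volume.restrict (Set.Ioc (0:ℝ) 1))
    _ ≤ ∫ _ in Set.Ioc (0:ℝ) 1, tvDist P Q := by
        refine integral_mono_of_nonneg ?_ (integrable_const _) ?_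
        · filter_upwards with t using abs_nonneg _
        · filter_upwards with t
          exact abs_measure_sub_le_tvDist P Q
            (measurableSet_le measurable_const hf)
    _ = tvDist P Q := by simp

/-- The kernel-based divergence `D(P‖Q)` is bounded in absolute value by
the total variation distance between `P` and `Q`. -/
theorem kernel_divergence_le_tvDist {X : Type*} [MeasurableSpace X]
    (P Q : Measure X) [IsProbabilityMeasure P] [IsProbabilityMeasure Q]
    (k : X × X → ℝ) (hk : Measurable k)
    (hk0 : ∀ p, 0 ≤ k p) (hk1 : ∀ p, k p ≤ 1) :
    |(∫ r, ∫ r', k (r, r') ∂P ∂P) - (∫ r, ∫ q, k (r, q) ∂Q ∂P)|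
      ≤ tvDist P Q := by
  have hkr : ∀ r, Measurable fun x => k (r, x) := fun r =>
    hk.comp measurable_prodMk_left
  have hmeasI : ∀ (μ : Measure X) [SFinite μ],
      Measurable fun r => ∫ x, k (r, x) ∂μ := by
    intro μ _
    exact (StronglyMeasurable.integral_prod_right'
      hk.stronglyMeasurable).measurable
  have hbound : ∀ (μ : Measure X) [IsProbabilityMeasure μ] (r : X),
      ∫ x, k (r, x) ∂μ ∈ Set.Icc (0:ℝ) 1 := by
    intro μ _ r
    constructor
    · exact integral_nonneg fun x => hk0 _
    · calc ∫ x, k (r, x) ∂μ ≤ ∫ _, (1:ℝ) ∂μ := by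
            refine integral_mono ?_ (integrable_const 1) fun x => hk1 _
            refine (integrable_const (1 : ℝ)).mono'
              (hkr r).aestronglyMeasurable ?_
            filter_upwards with x
            rw [Real.norm_eq_abs, abs_of_nonneg (hk0 _)]
            exact hk1 _
        _ = 1 := by simp
  have hIntI : ∀ (μ : Measure X) [IsProbabilityMeasure μ],
      Integrable (fun r => ∫ x, k (r, x) ∂μ) P := by
    intro μ _
    refine (integrable_const (1 : ℝ)).mono'
      (hmeasI μ).aestronglyMeasurable ?_
    filter_upwards with r
    rw [Real.norm_eq_abs, abs_of_nonneg (hbound μ r).1]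
    exact (hbound μ r).2
  rw [← integral_sub (hIntI P) (hIntI Q)]
  calc |∫ r, ((∫ x, k (r, x) ∂P) - ∫ x, k (r, x) ∂Q) ∂P|
      ≤ ∫ r, |(∫ x, k (r, x) ∂P) - ∫ x, k (r, x) ∂Q| ∂P :=
        by simpa [Real.norm_eq_abs] using
          norm_integral_le_integral_norm
            (fun r => (∫ x, k (r, x) ∂P) - ∫ x, k (r, x) ∂Q) (μ := P)
    _ ≤ ∫ _, tvDist P Q ∂P := by
        refine integral_mono_of_nonneg ?_ (integrable_const _) ?_
        · filter_upwards with r using abs_nonneg _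
        · filter_upwards with r
          exact abs_integral_sub_le_tvDist P Q _ (hkr r) (fun x => hk0 _)
            (fun x => hk1 _)
    _ = tvDist P Q := by simp
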